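/- For H ∈ (0,1), θ > 0, σ ∈ ℝ and t ≥ 0, define Var_H(t) = (σ²/2) ( ∫₀ᵗ 2H e^{−z/θ} z^{2H−1} dz + e^{−2t/θ} ∫₀ᵗ 2H e^{z/θ} z^{2H−1} dz ). Then: (i) (H,t) ↦ Var_H(t) is continuous on (0,1) × [0,∞); (ii) for every t ≥ 0, lim_{H → 1⁻} Var_H(t) = σ²θ² (1 − e^{−t/θ})²; (iii) for every t ≥ 0, lim_{H → 0⁺} Var_H(t) = 0 if t = 0, and = (σ²/2)(1 + e^{−2t/θ}) if t > 0. -/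

import Mathlib

open MeasureTheory Real Filter

/-- The variance function of the fOU process with deterministic initial value. -/
noncomputable def VarH (θ σ H t : ℝ) : ℝ :=
  (σ^2 / 2) *
    ((∫ z in (0:ℝ)..t, 2*H * Real.exp (-z/θ) * z ^ (2*H-1))
      + Real.exp (-2*t/θ) * (∫ z in (0:ℝ)..t, 2*H * Real.exp (z/θ) * z ^ (2*H-1)))

/-!
Substituting `z = t u` writes each integral in `VarH` as `t ^ (2H)` times
`∫₀¹ 2H u^(2H-1) e^(su) du`, the moment generating function of the Beta(2H, 1) law at
`s = ∓t/θ`. An integration by parts turns it into `e^s - s ∫₀¹ u^(2H) e^(su) du`, and the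
last integral is jointly continuous in `(H, s)` for `H > -1/2` by dominated convergence. So
the rescaled expression is continuous in `H` past both ends of `(0, 1)`: at `H = 0` the Beta
law degenerates to `δ₀`, whose generating function is `1`, and at `H = 1` the integrals are
elementary.
-/

open Set Topology

noncomputable def rpowExpIntegral (p s : ℝ) : ℝ := ∫ u in (0:ℝ)..1, u ^ p * exp (s * u)

theorem intervalIntegrable_rpow_mul_exp {p : ℝ} (hp : -1 < p) (s a b : ℝ) :
    IntervalIntegrable (fun u : ℝ => u ^ p * exp (s * u)) volume a b :=
  (intervalIntegral.intervalIntegrable_rpow' hp).mul_continuousOn (by fun_prop)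

theorem continuousAt_rpowExpIntegral {p : ℝ} (hp : -1 < p) (s : ℝ) :
    ContinuousAt (fun q : ℝ × ℝ => rpowExpIntegral q.1 q.2) (p, s) := by
  -- `(p - 1) / 2` lies strictly between `-1` and `p`: `u ^ ((p - 1) / 2)` dominates `u ^ q`
  -- for `q` near `p` and `u ∈ (0, 1]`, and is integrable.
  have hr : -1 < (p - 1) / 2 := by linarith
  have hnhds : Ioi ((p - 1) / 2) ×ˢ Metric.ball s 1 ∈ 𝓝 (p, s) :=
    prod_mem_nhds (Ioi_mem_nhds (by linarith)) (Metric.ball_mem_nhds s one_pos)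
  refine intervalIntegral.continuousAt_of_dominated_interval
    (bound := fun u => u ^ ((p - 1) / 2) * exp (|s| + 1)) ?_ ?_
    ((intervalIntegral.intervalIntegrable_rpow' hr).mul_const _) ?_
  · exact .of_forall fun q =>
      (by fun_prop : Measurable fun u : ℝ => u ^ q.1 * exp (q.2 * u)).aestronglyMeasurable
  · filter_upwards [hnhds] with q ⟨hq₁, hq₂⟩
    refine .of_forall fun u hu => ?_
    rw [uIoc_of_le zero_le_one] at hu
    have hq₂' : |q.2| ≤ |s| + 1 := by
      have := abs_sub_abs_le_abs_sub q.2 s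
      rw [Metric.mem_ball, dist_eq] at hq₂
      linarith
    have hexp : q.2 * u ≤ |s| + 1 := calc
      q.2 * u ≤ |q.2| * u := mul_le_mul_of_nonneg_right (le_abs_self _) hu.1.le
      _ ≤ |q.2| := mul_le_of_le_one_right (abs_nonneg _) hu.2
      _ ≤ |s| + 1 := hq₂'
    rw [norm_of_nonneg (mul_nonneg (rpow_nonneg hu.1.le _) (exp_pos _).le)]
    exact mul_le_mul (rpow_le_rpow_of_exponent_ge hu.1 hu.2 hq₁.le) (exp_le_exp.2 hexp)
      (exp_pos _).le (rpow_nonneg hu.1.le _)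
  · refine .of_forall fun u hu => ?_
    have hu0 : u ≠ 0 := by rw [uIoc_of_le zero_le_one] at hu; exact hu.1.ne'
    exact ((continuousAt_const_rpow hu0).comp continuousAt_fst).mul (by fun_prop)

theorem integral_rpow_mul_exp {p : ℝ} (hp : -1 < p) (c : ℝ) {t : ℝ} (ht : 0 ≤ t) :
    ∫ z in (0:ℝ)..t, z ^ p * exp (c * z) = t ^ (p + 1) * rpowExpIntegral p (c * t) := by
  have hscale := intervalIntegral.mul_integral_comp_mul_left
    (f := fun z => z ^ p * exp (c * z)) (a := 0) (b := 1) t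
  rw [mul_zero, mul_one] at hscale
  rw [← hscale, rpow_add_one' ht (by linarith), mul_comm (t ^ p), mul_assoc, rpowExpIntegral]
  congr 1
  rw [← intervalIntegral.integral_const_mul]
  refine intervalIntegral.integral_congr fun u hu => ?_
  rw [uIcc_of_le zero_le_one] at hu
  rw [mul_rpow ht hu.1, mul_assoc, ← mul_assoc c]

theorem add_one_mul_rpowExpIntegral {p : ℝ} (hp : -1 < p) (s : ℝ) :
    (p + 1) * rpowExpIntegral p s = exp s - s * rpowExpIntegral (p + 1) s := by
  have hderiv : ∀ u ∈ Ioo (0:ℝ) 1, HasDerivAt (fun u => u ^ (p + 1) * exp (s * u))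
      ((p + 1) * (u ^ p * exp (s * u)) + s * (u ^ (p + 1) * exp (s * u))) u := by
    intro u hu
    have h := (hasDerivAt_rpow_const (p := p + 1) (Or.inl hu.1.ne')).mul
      (((hasDerivAt_id u).const_mul s).exp)
    rw [add_sub_cancel_right] at h
    exact h.congr_deriv (by simp only [id]; ring)
  have hFTC := intervalIntegral.integral_eq_sub_of_hasDerivAt_of_le zero_le_one
    ((continuous_rpow_const (by linarith)).mul (by fun_prop)).continuousOn hderiv
    (((intervalIntegrable_rpow_mul_exp hp s 0 1).const_mul _).add
      ((intervalIntegrable_rpow_mul_exp (by linarith) s 0 1).const_mul _))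
  rw [intervalIntegral.integral_add ((intervalIntegrable_rpow_mul_exp hp s 0 1).const_mul _)
      ((intervalIntegrable_rpow_mul_exp (by linarith) s 0 1).const_mul _),
    intervalIntegral.integral_const_mul, intervalIntegral.integral_const_mul] at hFTC
  simp only [Pi.mul_apply, one_rpow, mul_one, one_mul, zero_rpow (by linarith : p + 1 ≠ 0),
    zero_mul, sub_zero] at hFTC
  rw [rpowExpIntegral, rpowExpIntegral]
  linarith

theorem mul_rpowExpIntegral_zero (s : ℝ) : s * rpowExpIntegral 0 s = exp s - 1 := by
  simp only [rpowExpIntegral, rpow_zero, one_mul]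
  rw [intervalIntegral.mul_integral_comp_mul_left (f := exp), integral_exp]
  simp

/-- For `H > 0` this is `∫₀¹ 2H u^(2H-1) e^(su) du` (see `integral_two_mul_exp_mul_rpow`). -/
noncomputable def betaMGF (H s : ℝ) : ℝ := exp s - s * rpowExpIntegral (2 * H) s

theorem continuousAt_betaMGF {H : ℝ} (hH : -1 / 2 < H) (s : ℝ) :
    ContinuousAt (fun q : ℝ × ℝ => betaMGF q.1 q.2) (H, s) := by
  have hK : ContinuousAt (fun q : ℝ × ℝ => rpowExpIntegral (2 * q.1) q.2) (H, s) :=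
    ContinuousAt.comp (g := fun q : ℝ × ℝ => rpowExpIntegral q.1 q.2) (x := (H, s))
      (f := fun q : ℝ × ℝ => (2 * q.1, q.2)) (continuousAt_rpowExpIntegral (by linarith) s)
      (by fun_prop)
  exact (continuous_exp.continuousAt.comp continuousAt_snd).sub (continuousAt_snd.mul hK)

theorem betaMGF_zero_left (s : ℝ) : betaMGF 0 s = 1 := by
  rw [betaMGF, mul_zero, mul_rpowExpIntegral_zero, sub_sub_cancel]

theorem sq_mul_betaMGF_one_left (s : ℝ) : s ^ 2 * betaMGF 1 s = 2 * (s * exp s - exp s + 1) := by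
  have h₀ := add_one_mul_rpowExpIntegral (p := 0) (by norm_num) s
  have h₁ := add_one_mul_rpowExpIntegral (p := 1) (by norm_num) s
  have h₂ := mul_rpowExpIntegral_zero s
  norm_num at h₀ h₁
  rw [betaMGF, mul_one, ← h₁]
  linear_combination (2 * s) * h₀ - 2 * h₂

theorem integral_two_mul_exp_mul_rpow {H : ℝ} (hH : 0 < H) (c : ℝ) {t : ℝ} (ht : 0 ≤ t) :
    ∫ z in (0:ℝ)..t, 2 * H * exp (c * z) * z ^ (2 * H - 1) =
      t ^ (2 * H) * betaMGF H (c * t) := by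
  have hp : -1 < 2 * H - 1 := by linarith
  have hIBP := add_one_mul_rpowExpIntegral hp (c * t)
  rw [sub_add_cancel] at hIBP
  simp_rw [mul_assoc (2 * H), mul_comm (exp _)]
  rw [intervalIntegral.integral_const_mul, integral_rpow_mul_exp hp c ht, sub_add_cancel, betaMGF,
    ← hIBP]
  ring

noncomputable def VarHExt (θ σ H t : ℝ) : ℝ :=
  σ ^ 2 / 2 * t ^ (2 * H) * (betaMGF H (-t / θ) + exp (-2 * t / θ) * betaMGF H (t / θ))

theorem continuousAt_VarHExt (θ σ : ℝ) {H t : ℝ} (hH : 0 ≤ H) (ht : t ≠ 0 ∨ 0 < H) :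
    ContinuousAt (fun q : ℝ × ℝ => VarHExt θ σ q.1 q.2) (H, t) := by
  have hM : ∀ {f : ℝ → ℝ}, Continuous f →
      ContinuousAt (fun q : ℝ × ℝ => betaMGF q.1 (f q.2)) (H, t) := fun {f} hf =>
    ContinuousAt.comp (g := fun q : ℝ × ℝ => betaMGF q.1 q.2) (x := (H, t))
      (f := fun q : ℝ × ℝ => (q.1, f q.2)) (continuousAt_betaMGF (by linarith) _) (by fun_prop)
  have hpow : ContinuousAt (fun q : ℝ × ℝ => q.2 ^ (2 * q.1)) (H, t) :=
    continuousAt_snd.rpow (by fun_prop) (ht.imp_right fun h => by simpa using h)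
  exact (continuousAt_const.mul hpow).mul
    ((hM (f := fun t => -t / θ) (by fun_prop)).add
      ((by fun_prop : Continuous fun q : ℝ × ℝ => exp (-2 * q.2 / θ)).continuousAt.mul
        (hM (f := fun t => t / θ) (by fun_prop))))

theorem VarHExt_zero_left (θ σ t : ℝ) :
    VarHExt θ σ 0 t = σ ^ 2 / 2 * (1 + exp (-2 * t / θ)) := by
  simp [VarHExt, betaMGF_zero_left]

theorem VarHExt_one_left {θ : ℝ} (hθ : θ ≠ 0) (σ t : ℝ) :
    VarHExt θ σ 1 t = σ ^ 2 * θ ^ 2 * (1 - exp (-t / θ)) ^ 2 := by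
  obtain ⟨a, rfl⟩ : ∃ a, t = θ * a := ⟨t / θ, by field_simp⟩
  have h₁ := sq_mul_betaMGF_one_left (-a)
  have h₂ := sq_mul_betaMGF_one_left a
  have e₁ : exp (-2 * a) = exp (-a) ^ 2 := by rw [← exp_nat_mul]; ring_nf
  have e₂ : exp (-2 * a) * exp a = exp (-a) := by rw [← exp_add]; ring_nf
  have hdiv : ∀ c : ℝ, c * (θ * a) / θ = c * a := fun c => by field_simp
  rw [VarHExt, mul_one, rpow_two]
  simp only [show -(θ * a) / θ = -a by field_simp, hdiv, mul_div_cancel_left₀ _ hθ]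
  linear_combination (σ ^ 2 / 2 * θ ^ 2) * h₁ + (σ ^ 2 / 2 * θ ^ 2 * exp (-2 * a)) * h₂
    + σ ^ 2 * θ ^ 2 * e₁ + σ ^ 2 * θ ^ 2 * (a - 1) * e₂

theorem VarH_eq_VarHExt {θ σ H t : ℝ} (hH : 0 < H) (ht : 0 ≤ t) :
    VarH θ σ H t = VarHExt θ σ H t := by
  have h₁ := integral_two_mul_exp_mul_rpow hH (-θ⁻¹) ht
  have h₂ := integral_two_mul_exp_mul_rpow hH θ⁻¹ ht
  simp only [neg_mul, inv_mul_eq_div, ← neg_div] at h₁ h₂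
  rw [VarH, VarHExt, h₁, h₂]
  ring

/-- continuity and boundary limits (as `H → 1⁻` and `H → 0⁺`) of the
variance function of the fOU process with deterministic initial value. -/
theorem VarH_continuity_and_limits (θ σ : ℝ) (hθ : 0 < θ) :
    ContinuousOn (fun p : ℝ × ℝ => VarH θ σ p.1 p.2) (Set.Ioo (0:ℝ) 1 ×ˢ Set.Ici (0:ℝ))
    ∧ (∀ t ≥ (0:ℝ),
        Filter.Tendsto (fun H => VarH θ σ H t) (nhdsWithin 1 (Set.Iio 1))
          (nhds (σ^2 * θ^2 * (1 - Real.exp (-t/θ))^2)))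
    ∧ (Filter.Tendsto (fun H => VarH θ σ H 0) (nhdsWithin 0 (Set.Ioi 0)) (nhds 0))
    ∧ (∀ t > (0:ℝ),
        Filter.Tendsto (fun H => VarH θ σ H t) (nhdsWithin 0 (Set.Ioi 0))
          (nhds (σ^2/2 * (1 + Real.exp (-2*t/θ))))) := by
  have hsection : ∀ {H₀ t : ℝ}, 0 ≤ H₀ → (t ≠ 0 ∨ 0 < H₀) →
      Tendsto (fun H => VarHExt θ σ H t) (𝓝 H₀) (𝓝 (VarHExt θ σ H₀ t)) :=
    fun {_ t} hH ht => ((continuousAt_VarHExt θ σ hH ht).comp (f := fun H => (H, t))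
      (continuousAt_id.prodMk continuousAt_const)).tendsto
  refine ⟨fun p hp => ?_, fun t ht => ?_, ?_, fun t ht => ?_⟩
  · exact (continuousAt_VarHExt θ σ hp.1.1.le (.inr hp.1.1)).continuousWithinAt.congr
      (fun q hq => VarH_eq_VarHExt hq.1.1 hq.2) (VarH_eq_VarHExt hp.1.1 hp.2)
  · rw [← VarHExt_one_left hθ.ne']
    refine ((hsection zero_le_one (.inr one_pos)).mono_left nhdsWithin_le_nhds).congr' ?_
    filter_upwards [Ioo_mem_nhdsLT one_pos] with H hH using (VarH_eq_VarHExt hH.1 ht).symm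
  · simp [VarH]
  · rw [← VarHExt_zero_left]
    refine ((hsection le_rfl (.inl ht.ne')).mono_left nhdsWithin_le_nhds).congr' ?_
    filter_upwards [self_mem_nhdsWithin] with H hH using (VarH_eq_VarHExt hH ht.le).symm
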